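/- Define h_2(a_1, a_2, b) = 3(a_1 − a_2)·b^2 + (2a_1^2 + a_1·a_2 − 4a_2^2 + 9(a_1 − a_2) − 3)·b + a_1^3 − 2a_2^3 + 3a_1^2 + 3a_1·a_2 − 6a_2^2 + 3a_1 − 6a_2. If a_1, a_2, b are real numbers with 0 ≤ a_1 ≤ a_2 < 1 and b ≥ 0, and (a_1, a_2, b) ≠ (0, 0, 0), then h_2(a_1, a_2, b) < 0. -/
import Mathlib


/-- The polynomial `h₂` controlling K-instability of polarizations of `𝔽₁`-type on
the smooth del Pezzo surface of degree `6`. -/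
noncomputable def h2 (a1 a2 b : ℝ) : ℝ :=
  3 * (a1 - a2) * b ^ 2 +
    (2 * a1 ^ 2 + a1 * a2 - 4 * a2 ^ 2 + 9 * (a1 - a2) - 3) * b +
    a1 ^ 3 - 2 * a2 ^ 3 + 3 * a1 ^ 2 + 3 * a1 * a2 - 6 * a2 ^ 2 + 3 * a1 - 6 * a2

theorem h2_negative (a1 a2 b : ℝ)
    (h0 : 0 ≤ a1) (h12 : a1 ≤ a2) (h2lt : a2 < 1) (hb : 0 ≤ b)
    (hne : ¬(a1 = 0 ∧ a2 = 0 ∧ b = 0)) :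
    h2 a1 a2 b < 0 := by
  unfold h2
  rcases eq_or_lt_of_le (h0.trans h12) with ha2 | ha2
  · -- a2 = 0, hence a1 = 0, b > 0
    have ha1 : a1 = 0 := le_antisymm (h12.trans_eq ha2.symm) h0
    have hb' : 0 < b := lt_of_le_of_ne hb (by
      rintro rfl; exact hne ⟨ha1, ha2.symm, rfl⟩)
    rw [ha1, ← ha2]
    ring_nf
    linarith
  · nlinarith [mul_nonneg hb hb, mul_nonneg (mul_nonneg hb hb) (sub_nonneg.2 h12),
      mul_nonneg hb (sub_nonneg.2 h12), mul_nonneg h0 (sub_nonneg.2 h12),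
      mul_nonneg (mul_nonneg h0 h0) (sub_nonneg.2 h12),
      mul_pos ha2 ha2, mul_pos (mul_pos ha2 ha2) ha2,
      mul_nonneg hb (mul_nonneg h0 h0)]
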